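/- Let 𝓤, 𝓥, 𝓩 be finite sets, P_U a probability mass function on 𝓤, P_{V|U} a channel from 𝓤 to 𝓥, and W a channel from 𝓥 to 𝓩. Fix n ≥ 1 and finite sets 𝓑ₙ, 𝓔ₙ, 𝓢ₙ. Construct a random codebook Λ as follows: independently for each e ∈ 𝓔ₙ draw Uⁿ(e) ∈ 𝓤ⁿ according to the product distribution P_U^{⊗n}, and then independently for each (b, e) ∈ 𝓑ₙ × 𝓔ₙ draw Vⁿ(b, e) ∈ 𝓥ⁿ according to ∏_{i=1}^{n} P_{V|U}(·|U_i(e)). Let B be uniform on 𝓑ₙ, E a random variable on 𝓔ₙ, and (𝓕, F) a family of two-universal hash functions from 𝓑ₙ to 𝓢ₙ, with B, E, F, Λ mutually statistically independent. Let Zⁿ be the output of the memoryless channel W^{⊗n}(zⁿ|vⁿ) = ∏_i W(z_i|v_i) with input Vⁿ = Λ(B, E), conditionally independent of (B, E, F, Λ) given Vⁿ. Then for every ρ with 0 < ρ < 1: I(F(B); Zⁿ | F, Λ) ≤ (1/ρ) · (|𝓢ₙ|/|𝓑ₙ|)^ρ · [ Σ_{u∈𝓤} P_U(u) exp( φ(ρ,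 W, P_{V|U=u}) ) ]ⁿ. -/

import Mathlib

open scoped BigOperators

noncomputable section

/-- A probability mass function on a finite type. -/
def IsPMF {α : Type} [Fintype α] (p : α → ℝ) : Prop :=
  (∀ a, 0 ≤ p a) ∧ ∑ a, p a = 1

/-- A channel, i.e. a conditional probability mass function. -/
def IsChannel {α β : Type} [Fintype α] [Fintype β] (W : α → β → ℝ) : Prop :=
  ∀ a, IsPMF (W a)

/-- Mutual information (natural base) of a joint pmf on a product of finite types,
with the usual convention that terms with zero probability vanish
(recall `Real.log 0 = 0` in Mathlib). -/
def mutualInfo {α β : Type} [Fintype α] [Fintype β] (p : α × β → ℝ) : ℝ :=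
  ∑ a, ∑ b, p (a, b) *
    Real.log (p (a, b) / ((∑ b', p (a, b')) * (∑ a', p (a', b))))

/-- Shannon entropy (natural base). -/
def entropy {α : Type} [Fintype α] (p : α → ℝ) : ℝ :=
  -∑ a, p a * Real.log (p a)

/-- Conditional entropy H(A|B) (natural base) of a joint pmf on `α × β`. -/
def condEntropy {α β : Type} [Fintype α] [Fintype β] (p : α × β → ℝ) : ℝ :=
  -∑ a, ∑ b, p (a, b) * Real.log (p (a, b) / ∑ a', p (a', b))

/-- Conditional mutual information I(B;C|A) (natural base) of a joint pmf on `α × β × γ`. -/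
def condMutualInfo {α β γ : Type} [Fintype α] [Fintype β] [Fintype γ]
    (p : α × β × γ → ℝ) : ℝ :=
  ∑ a, ∑ b, ∑ c, p (a, b, c) *
    Real.log (p (a, b, c) * (∑ b', ∑ c', p (a, b', c')) /
      ((∑ c', p (a, b, c')) * (∑ b', p (a, b', c))))

/-- `(μ, hash)` is a family of two-universal hash functions from `L` to `M`:
the random choice of the function is given by the pmf `μ` on the index set `ι`,
and for any two distinct inputs the collision probability is at most `1 / |M|`. -/
def TwoUniversal {ι L M : Type} [Fintype ι] [Fintype L] [Fintype M] [DecidableEq M]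
    (μ : ι → ℝ) (hash : ι → L → M) : Prop :=
  IsPMF μ ∧ ∀ x₁ x₂ : L, x₁ ≠ x₂ →
    ∑ i, μ i * (if hash i x₁ = hash i x₂ then (1 : ℝ) else 0) ≤ 1 / Fintype.card M

/-!
Conditioning on `E` can only decrease the uncertainty of `F(B)` given `Zⁿ`, so for a fixed
codebook and hash function the mutual information is at most the `P_E`-average of
`log |𝓢ₙ| - H(F(B) | Zⁿ, E = e)`. The bound `log t ≤ (t ^ ρ - 1) / ρ` turns this into
`(|𝓢ₙ| ^ ρ ∑_z q(z) ^ (-ρ) ∑_s q(s, z) ^ (1 + ρ) - 1) / ρ`. Averaging over the hash function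
(subadditivity and concavity of `x ↦ x ^ ρ`, plus the collision bound) splits the inner sum into
a term without collisions and a term `|𝓢ₙ| ^ (-ρ) q(z)` that cancels the `- 1`; Hölder bounds the
former by Gallager's `∑_z (∑_b W(z|b) ^ (1 / (1 - ρ))) ^ (1 - ρ)`. Finally, Jensen's inequality
over the random codebook and the product structure of the memoryless channel turn its expectation
into `|𝓑ₙ| ^ (1 - ρ) (∑_u P_U(u) exp φ(ρ, W, P_{V|U=u})) ^ n`.
-/

open Finset Real

section InformationMeasures

variable {α β : Type} [Fintype α] [Fintype β]

theorem sum_mul_log_sum_div_sum_le {ι : Type*} (s : Finset ι) {a b : ι → ℝ}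
    (ha : ∀ i ∈ s, 0 ≤ a i) (hb : ∀ i ∈ s, 0 ≤ b i) (hab : ∀ i ∈ s, 0 < a i → 0 < b i) :
    (∑ i ∈ s, a i) * log ((∑ i ∈ s, a i) / ∑ i ∈ s, b i) ≤ ∑ i ∈ s, a i * log (a i / b i) := by
  rcases (sum_nonneg ha).eq_or_lt with hA | hA
  · rw [← hA, zero_mul]
    refine sum_nonneg fun i hi => ?_
    rw [(sum_eq_zero_iff_of_nonneg ha).1 hA.symm i hi, zero_mul]
  set A := ∑ i ∈ s, a i
  set B := ∑ i ∈ s, b i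
  obtain ⟨j, hj, haj⟩ := (sum_pos_iff_of_nonneg ha).1 hA
  have hB : 0 < B := (hab j hj haj).trans_le (single_le_sum hb hj)
  -- `log x ≥ 1 - 1/x` at `x = (a i / b i) / (A / B)`, which sums to the claim.
  have term : ∀ i ∈ s, a i * log (A / B) + a i - A / B * b i ≤ a i * log (a i / b i) := by
    intro i hi
    rcases (ha i hi).eq_or_lt with hai | hai
    · rw [← hai]
      nlinarith [hb i hi, div_pos hA hB]
    have hbi := hab i hi hai
    have key := one_sub_inv_le_log_of_pos (div_pos (div_pos hai hbi) (div_pos hA hB))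
    rw [log_div (by positivity) (by positivity), inv_div] at key
    have : a i * (1 - A / B / (a i / b i)) = a i - A / B * b i := by field_simp
    nlinarith [mul_le_mul_of_nonneg_left key hai.le]
  calc A * log (A / B) = ∑ i ∈ s, (a i * log (A / B) + a i - A / B * b i) := by
        rw [sum_sub_distrib, sum_add_distrib, ← sum_mul, ← mul_sum, div_mul_cancel₀ _ hB.ne']
        ring
    _ ≤ ∑ i ∈ s, a i * log (a i / b i) := sum_le_sum term

theorem entropy_le_log_card [Nonempty α] {p : α → ℝ} (hp : IsPMF p) :
    entropy p ≤ log (Fintype.card α) := by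
  have hc : (0 : ℝ) < Fintype.card α := by exact_mod_cast Fintype.card_pos
  have gibbs := sum_mul_log_sum_div_sum_le univ (b := fun _ => (Fintype.card α : ℝ)⁻¹)
    (fun a _ => hp.1 a) (fun _ _ => by positivity) (fun _ _ _ => by positivity)
  have term : ∀ a, p a * log (p a / (Fintype.card α : ℝ)⁻¹)
      = p a * log (p a) + p a * log (Fintype.card α) := by
    intro a
    rcases (hp.1 a).eq_or_lt with h | h
    · simp [← h]
    · rw [div_inv_eq_mul, log_mul h.ne' hc.ne', mul_add]
  simp only [hp.2, sum_const, card_univ, nsmul_eq_mul, mul_inv_cancel₀ hc.ne', div_one,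
    log_one, mul_zero, term, sum_add_distrib, ← sum_mul, one_mul] at gibbs
  rw [entropy]
  linarith

theorem mutualInfo_eq_entropy_sub_condEntropy {p : α × β → ℝ} (hp : 0 ≤ p) :
    mutualInfo p = entropy (fun a => ∑ b, p (a, b)) - condEntropy p := by
  have term : ∀ a b, p (a, b) * log (p (a, b) / ((∑ b', p (a, b')) * ∑ a', p (a', b)))
      = p (a, b) * log (p (a, b) / ∑ a', p (a', b)) - p (a, b) * log (∑ b', p (a, b')) := by
    intro a b
    rcases (hp (a, b)).eq_or_lt with h | h
    · simp [← h]
    have hA : 0 < ∑ b', p (a, b') :=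
      h.trans_le (single_le_sum (f := fun b' => p (a, b')) (fun _ _ => hp _) (mem_univ b))
    have hB : 0 < ∑ a', p (a', b) :=
      h.trans_le (single_le_sum (f := fun a' => p (a', b)) (fun _ _ => hp _) (mem_univ a))
    rw [log_div h.ne' (by positivity), log_mul hA.ne' hB.ne', log_div h.ne' hB.ne']
    ring
  simp only [mutualInfo, entropy, condEntropy, term, sum_sub_distrib, ← sum_mul]
  ring

theorem sum_mul_condEntropy_le {ε : Type} [Fintype ε] {w : ε → ℝ} {q : ε → α × β → ℝ}
    (hw : 0 ≤ w) (hq : ∀ e, 0 ≤ q e) :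
    ∑ e, w e * condEntropy (q e) ≤ condEntropy (fun x => ∑ e, w e * q e x) := by
  have pointwise : ∀ a b,
      (∑ e, w e * q e (a, b)) * log ((∑ e, w e * q e (a, b)) / ∑ a', ∑ e, w e * q e (a', b))
        ≤ ∑ e, w e * (q e (a, b) * log (q e (a, b) / ∑ a', q e (a', b))) := by
    intro a b
    have hmarg : ∀ e, q e (a, b) ≤ ∑ a', q e (a', b) := fun e =>
      single_le_sum (f := fun a' => q e (a', b)) (fun _ _ => hq e _) (mem_univ a)
    have logsum := sum_mul_log_sum_div_sum_le univ
      (a := fun e => w e * q e (a, b)) (b := fun e => w e * ∑ a', q e (a', b))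
      (fun e _ => mul_nonneg (hw e) (hq e _))
      (fun e _ => mul_nonneg (hw e) (sum_nonneg fun _ _ => hq e _))
      (fun e _ h => h.trans_le (mul_le_mul_of_nonneg_left (hmarg e) (hw e)))
    simp only [mul_sum] at logsum ⊢
    rw [sum_comm (s := univ) (t := univ)] at logsum
    refine logsum.trans_eq (sum_congr rfl fun e _ => ?_)
    rcases (hw e).eq_or_lt with h | h
    · simp [← h]
    · rw [← mul_sum, mul_div_mul_left _ _ h.ne', mul_assoc]
  suffices ∑ a, ∑ b, (∑ e, w e * q e (a, b)) *
        log ((∑ e, w e * q e (a, b)) / ∑ a', ∑ e, w e * q e (a', b))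
      ≤ ∑ e, w e * ∑ a, ∑ b, q e (a, b) * log (q e (a, b) / ∑ a', q e (a', b)) by
    simp only [condEntropy, mul_neg, sum_neg_distrib]
    linarith
  calc _ ≤ ∑ a, ∑ b, ∑ e, w e * (q e (a, b) * log (q e (a, b) / ∑ a', q e (a', b))) :=
        sum_le_sum fun a _ => sum_le_sum fun b _ => pointwise a b
    _ = _ := by
      simp only [mul_sum]
      exact (sum_congr rfl fun _ _ => sum_comm).trans sum_comm

theorem IsPMF.sum_snd {p : α × β → ℝ} (hp : IsPMF p) : IsPMF (fun a => ∑ b, p (a, b)) :=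
  ⟨fun a => sum_nonneg fun b _ => hp.1 _, by rw [← hp.2, Fintype.sum_prod_type]⟩

theorem IsPMF.sum_mul {ε γ : Type} [Fintype ε] [Fintype γ] {w : ε → ℝ} {q : ε → γ → ℝ}
    (hw : IsPMF w) (hq : ∀ e, IsPMF (q e)) : IsPMF (fun x => ∑ e, w e * q e x) := by
  refine ⟨fun x => sum_nonneg fun e _ => mul_nonneg (hw.1 e) ((hq e).1 x), ?_⟩
  rw [sum_comm]
  simp only [← mul_sum, (hq _).2, mul_one, hw.2]

theorem mutualInfo_sum_mul_le [Nonempty α] {ε : Type} [Fintype ε] {w : ε → ℝ}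
    {q : ε → α × β → ℝ} (hw : IsPMF w) (hq : ∀ e, IsPMF (q e)) :
    mutualInfo (fun x => ∑ e, w e * q e x)
      ≤ ∑ e, w e * (log (Fintype.card α) - condEntropy (q e)) := by
  have hp := hw.sum_mul hq
  rw [mutualInfo_eq_entropy_sub_condEntropy hp.1]
  have hH := entropy_le_log_card hp.sum_snd
  have hconc := sum_mul_condEntropy_le hw.1 fun e => (hq e).1
  simp only [mul_sub, sum_sub_distrib, ← sum_mul, hw.2, one_mul]
  linarith

theorem mul_log_mul_div_le {q Q S ρ : ℝ} (hq : 0 ≤ q) (hqQ : q ≤ Q) (hS : 0 < S) (hρ : 0 < ρ) :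
    q * (log S + log (q / Q)) ≤ (S ^ ρ * Q ^ (-ρ) * q ^ (1 + ρ) - q) / ρ := by
  rcases hq.eq_or_lt with h | h
  · simp [← h, zero_rpow (by positivity : 1 + ρ ≠ 0)]
  have hQ := h.trans_le hqQ
  have ht : 0 < S * q / Q := by positivity
  have hlog : log (S * q / Q) ≤ ((S * q / Q) ^ ρ - 1) / ρ := by
    rw [le_div_iff₀ hρ, mul_comm, ← log_rpow ht]
    exact log_le_sub_one_of_pos (rpow_pos_of_pos ht ρ)
  rw [← log_mul hS.ne' (by positivity), ← mul_div_assoc]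
  calc q * log (S * q / Q) ≤ q * (((S * q / Q) ^ ρ - 1) / ρ) :=
        mul_le_mul_of_nonneg_left hlog hq
    _ = (S ^ ρ * Q ^ (-ρ) * q ^ (1 + ρ) - q) / ρ := by
      rw [div_rpow (by positivity) hQ.le, mul_rpow hS.le hq, rpow_neg hQ.le,
        rpow_add h, rpow_one]
      field_simp

theorem log_card_sub_condEntropy_le {γ : Type} [Fintype γ] [Nonempty α] {q : α × γ → ℝ}
    (hq : IsPMF q) {ρ : ℝ} (hρ : 0 < ρ) :
    log (Fintype.card α) - condEntropy q
      ≤ ((Fintype.card α : ℝ) ^ ρ * ∑ z, (∑ a, q (a, z)) ^ (-ρ) * ∑ a, q (a, z) ^ (1 + ρ) - 1)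
        / ρ := by
  have hc : (0 : ℝ) < Fintype.card α := by exact_mod_cast Fintype.card_pos
  have hsum : ∑ a, ∑ z, q (a, z) = 1 := by rw [← hq.2, Fintype.sum_prod_type]
  calc log (Fintype.card α) - condEntropy q
    _ = ∑ a, ∑ z, q (a, z) * (log (Fintype.card α) + log (q (a, z) / ∑ a', q (a', z))) := by
      simp only [condEntropy, mul_add, sum_add_distrib, ← sum_mul, hsum]
      ring
    _ ≤ ∑ a, ∑ z, ((Fintype.card α : ℝ) ^ ρ * (∑ a', q (a', z)) ^ (-ρ) * q (a, z) ^ (1 + ρ)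
          - q (a, z)) / ρ :=
      sum_le_sum fun a _ => sum_le_sum fun z _ => mul_log_mul_div_le (hq.1 _)
        (single_le_sum (f := fun a' => q (a', z)) (fun _ _ => hq.1 _) (mem_univ a)) hc hρ
    _ = _ := by
      simp only [← sum_div, sum_sub_distrib, hsum, mul_sum, mul_assoc]
      rw [sum_comm]

end InformationMeasures

theorem rpow_neg_sum_mul_sum_rpow_one_add_le {ι : Type*} (s : Finset ι) {x : ι → ℝ}
    (hx : ∀ i ∈ s, 0 ≤ x i) {ρ : ℝ} (hρ₀ : 0 < ρ) (hρ₁ : ρ < 1) :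
    (∑ i ∈ s, x i) ^ (-ρ) * ∑ i ∈ s, x i ^ (1 + ρ)
      ≤ (∑ i ∈ s, x i ^ (1 / (1 - ρ))) ^ (1 - ρ) := by
  rcases (sum_nonneg hx).eq_or_lt with hX | hX
  · rw [← hX, zero_rpow (neg_ne_zero.2 hρ₀.ne'), zero_mul]
    exact rpow_nonneg (sum_nonneg fun i hi => rpow_nonneg (hx i hi) _) _
  -- Hölder with exponents `1 / (1 - ρ)` and `1 / ρ`, applied to `x i * x i ^ ρ`
  have holder := inner_le_Lp_mul_Lq_of_nonneg s (Real.HolderConjugate.one_sub_inv_inv hρ₀ hρ₁)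
    hx fun i hi => rpow_nonneg (hx i hi) ρ
  rw [sum_congr rfl fun i hi => (rpow_one_add' (hx i hi) (by linarith)).symm,
    sum_congr rfl fun i hi => rpow_rpow_inv (hx i hi) hρ₀.ne'] at holder
  simp only [one_div, inv_inv] at holder ⊢
  calc (∑ i ∈ s, x i) ^ (-ρ) * ∑ i ∈ s, x i ^ (1 + ρ)
    _ ≤ (∑ i ∈ s, x i) ^ (-ρ) * ((∑ i ∈ s, x i ^ (1 - ρ)⁻¹) ^ (1 - ρ) * (∑ i ∈ s, x i) ^ ρ) :=
      mul_le_mul_of_nonneg_left holder (rpow_nonneg hX.le _)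
    _ = (∑ i ∈ s, x i ^ (1 - ρ)⁻¹) ^ (1 - ρ) := by
      rw [rpow_neg hX.le]
      field_simp

section Hashing

variable {ι L M : Type} [Fintype ι] [Fintype L] [Fintype M] [DecidableEq M]

theorem sum_fiber_rpow_one_add (h : L → M) {x : L → ℝ} (hx : 0 ≤ x) {ρ : ℝ} (hρ : 1 + ρ ≠ 0) :
    ∑ s, (∑ b, if h b = s then x b else 0) ^ (1 + ρ)
      = ∑ b, x b * (∑ b', if h b' = h b then x b' else 0) ^ ρ := by
  have hy : ∀ s, 0 ≤ ∑ b, if h b = s then x b else 0 := fun s =>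
    sum_nonneg fun b _ => by split_ifs; exacts [hx b, le_rfl]
  calc ∑ s, (∑ b, if h b = s then x b else 0) ^ (1 + ρ)
    _ = ∑ s, ∑ b, (if h b = s then x b else 0) * (∑ b', if h b' = s then x b' else 0) ^ ρ :=
      sum_congr rfl fun s _ => by rw [rpow_add' (hy s) hρ, rpow_one, sum_mul]
    _ = _ := by
      rw [sum_comm]
      simp [ite_mul]

theorem TwoUniversal.sum_mul_sum_erase_le [DecidableEq L] {μ : ι → ℝ} {hash : ι → L → M}
    (hhash : TwoUniversal μ hash) {x : L → ℝ} (hx : 0 ≤ x) (b : L) :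
    ∑ i, μ i * ∑ b' ∈ univ.erase b, (if hash i b' = hash i b then x b' else 0)
      ≤ (∑ b', x b') / Fintype.card M := by
  calc ∑ i, μ i * ∑ b' ∈ univ.erase b, (if hash i b' = hash i b then x b' else 0)
    _ = ∑ b' ∈ univ.erase b, x b' * ∑ i, μ i * (if hash i b' = hash i b then 1 else 0) := by
      simp only [mul_sum, mul_ite, mul_one, mul_zero]
      rw [sum_comm]
      exact sum_congr rfl fun b' _ => sum_congr rfl fun i _ => by split_ifs <;> ring
    _ ≤ ∑ b' ∈ univ.erase b, x b' * (1 / Fintype.card M) :=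
      sum_le_sum fun b' hb' =>
        mul_le_mul_of_nonneg_left (hhash.2 b' b (ne_of_mem_erase hb')) (hx b')
    _ ≤ ∑ b', x b' * (1 / Fintype.card M) :=
      sum_le_sum_of_subset_of_nonneg (erase_subset _ _) fun b' _ _ =>
        mul_nonneg (hx b') (by positivity)
    _ = (∑ b', x b') / Fintype.card M := by rw [← sum_mul, mul_one_div]

theorem TwoUniversal.sum_mul_sum_rpow_one_add_le {μ : ι → ℝ} {hash : ι → L → M}
    (hhash : TwoUniversal μ hash) {x : L → ℝ} (hx : 0 ≤ x) {ρ : ℝ} (hρ₀ : 0 ≤ ρ)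
    (hρ₁ : ρ ≤ 1) :
    ∑ i, μ i * ∑ s, (∑ b, if hash i b = s then x b else 0) ^ (1 + ρ)
      ≤ ∑ b, x b ^ (1 + ρ) + (Fintype.card M : ℝ) ^ (-ρ) * (∑ b, x b) ^ (1 + ρ) := by
  classical
  obtain ⟨⟨hμ, hμ1⟩, -⟩ := id hhash
  -- `c i b` is the mass of the other inputs colliding with `b` under the `i`-th hash function
  let c : ι → L → ℝ := fun i b =>
    ∑ b' ∈ univ.erase b, if hash i b' = hash i b then x b' else 0
  have hc : ∀ i b, 0 ≤ c i b := fun i b =>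
    sum_nonneg fun b' _ => by split_ifs; exacts [hx b', le_rfl]
  have per_hash : ∀ i, ∑ s, (∑ b, if hash i b = s then x b else 0) ^ (1 + ρ)
      ≤ ∑ b, (x b ^ (1 + ρ) + x b * c i b ^ ρ) := by
    intro i
    rw [sum_fiber_rpow_one_add (hash i) hx (by positivity)]
    refine sum_le_sum fun b _ => ?_
    rw [← add_sum_erase _ _ (mem_univ b), if_pos rfl, rpow_add' (hx b) (by positivity),
      rpow_one, ← mul_add]
    exact mul_le_mul_of_nonneg_left (rpow_add_le_add_rpow (hx b) (hc i b) hρ₀ hρ₁) (hx b)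
  have averaged : ∀ b, ∑ i, μ i * c i b ^ ρ ≤ ((∑ b', x b') / Fintype.card M) ^ ρ := fun b =>
    calc ∑ i, μ i * c i b ^ ρ
      _ ≤ (∑ i, μ i * c i b) ^ ρ :=
        (concaveOn_rpow hρ₀ hρ₁).le_map_sum (fun i _ => hμ i) hμ1 fun i _ => hc i b
      _ ≤ _ := rpow_le_rpow (sum_nonneg fun i _ => mul_nonneg (hμ i) (hc i b))
        (hhash.sum_mul_sum_erase_le hx b) hρ₀
  have hX : 0 ≤ ∑ b, x b := sum_nonneg fun b _ => hx b
  calc ∑ i, μ i * ∑ s, (∑ b, if hash i b = s then x b else 0) ^ (1 + ρ)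
    _ ≤ ∑ i, μ i * ∑ b, (x b ^ (1 + ρ) + x b * c i b ^ ρ) :=
      sum_le_sum fun i _ => mul_le_mul_of_nonneg_left (per_hash i) (hμ i)
    _ = ∑ b, x b ^ (1 + ρ) + ∑ b, x b * ∑ i, μ i * c i b ^ ρ := by
      simp only [sum_add_distrib, mul_add]
      rw [← sum_mul, hμ1, one_mul]
      congr 1
      simp only [mul_sum]
      rw [sum_comm]
      exact sum_congr rfl fun b _ => sum_congr rfl fun i _ => by ring
    _ ≤ ∑ b, x b ^ (1 + ρ) + ∑ b, x b * ((∑ b', x b') / Fintype.card M) ^ ρ :=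
      add_le_add le_rfl (sum_le_sum fun b _ => mul_le_mul_of_nonneg_left (averaged b) (hx b))
    _ = _ := by
      rw [← sum_mul, div_rpow hX (Nat.cast_nonneg _), rpow_add' hX (by positivity), rpow_one,
        rpow_neg (Nat.cast_nonneg _)]
      ring

theorem TwoUniversal.rpow_neg_mul_sum_mul_sum_rpow_one_add_le {μ : ι → ℝ} {hash : ι → L → M}
    (hhash : TwoUniversal μ hash) {x : L → ℝ} (hx : 0 ≤ x) {ρ : ℝ} (hρ₀ : 0 < ρ) (hρ₁ : ρ < 1) :
    (∑ b, x b) ^ (-ρ) * ∑ i, μ i * ∑ s, (∑ b, if hash i b = s then x b else 0) ^ (1 + ρ)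
      ≤ (∑ b, x b ^ (1 / (1 - ρ))) ^ (1 - ρ) + (Fintype.card M : ℝ) ^ (-ρ) * ∑ b, x b := by
  have hX : 0 ≤ ∑ b, x b := sum_nonneg fun b _ => hx b
  calc (∑ b, x b) ^ (-ρ) * ∑ i, μ i * ∑ s, (∑ b, if hash i b = s then x b else 0) ^ (1 + ρ)
    _ ≤ (∑ b, x b) ^ (-ρ) *
          (∑ b, x b ^ (1 + ρ) + (Fintype.card M : ℝ) ^ (-ρ) * (∑ b, x b) ^ (1 + ρ)) :=
      mul_le_mul_of_nonneg_left (hhash.sum_mul_sum_rpow_one_add_le hx hρ₀.le hρ₁.le)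
        (rpow_nonneg hX _)
    _ = (∑ b, x b) ^ (-ρ) * ∑ b, x b ^ (1 + ρ) + (Fintype.card M : ℝ) ^ (-ρ) * ∑ b, x b := by
      rw [mul_add, mul_left_comm, ← rpow_add' hX (by norm_num)]
      norm_num
    _ ≤ _ := add_le_add (rpow_neg_sum_mul_sum_rpow_one_add_le univ (fun b _ => hx b) hρ₀ hρ₁)
      le_rfl

end Hashing

section PushForward

variable {α β γ : Type} [Fintype α] [Fintype β] [DecidableEq β]

/-- The joint pmf of `(h A, C)` for `(A, C) ∼ p`. -/
def mapFst (h : α → β) (p : α × γ → ℝ) : β × γ → ℝ :=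
  fun bz => ∑ a, if h a = bz.1 then p (a, bz.2) else 0

theorem sum_mapFst_fst (h : α → β) (p : α × γ → ℝ) (z : γ) :
    ∑ b, mapFst h p (b, z) = ∑ a, p (a, z) := by
  simp only [mapFst]
  rw [sum_comm]
  simp

theorem IsPMF.mapFst [Fintype γ] {p : α × γ → ℝ} (hp : IsPMF p) (h : α → β) :
    IsPMF (mapFst h p) := by
  refine ⟨fun bz => sum_nonneg fun a _ => by split_ifs; exacts [hp.1 _, le_rfl], ?_⟩
  rw [Fintype.sum_prod_type, sum_comm]
  simp only [sum_mapFst_fst]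
  rw [sum_comm, ← Fintype.sum_prod_type, hp.2]

end PushForward

theorem TwoUniversal.sum_mul_log_card_sub_condEntropy_le {ι L M γ : Type} [Fintype ι]
    [Fintype L] [Fintype M] [Fintype γ] [DecidableEq M] [Nonempty M] {μ : ι → ℝ}
    {hash : ι → L → M} (hhash : TwoUniversal μ hash) {p : L × γ → ℝ} (hp : IsPMF p) {ρ : ℝ}
    (hρ₀ : 0 < ρ) (hρ₁ : ρ < 1) :
    ∑ i, μ i * (log (Fintype.card M) - condEntropy (mapFst (hash i) p))
      ≤ (Fintype.card M : ℝ) ^ ρ / ρ * ∑ z, (∑ b, p (b, z) ^ (1 / (1 - ρ))) ^ (1 - ρ) := by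
  obtain ⟨⟨hμ, hμ1⟩, -⟩ := id hhash
  have hS : (0 : ℝ) < Fintype.card M := by exact_mod_cast Fintype.card_pos
  have hpZ1 : ∑ z, ∑ b, p (b, z) = 1 := by rw [← hp.2, Fintype.sum_prod_type, sum_comm]
  calc ∑ i, μ i * (log (Fintype.card M) - condEntropy (mapFst (hash i) p))
    _ ≤ ∑ i, μ i * (((Fintype.card M : ℝ) ^ ρ * ∑ z, (∑ b, p (b, z)) ^ (-ρ) *
          ∑ s, mapFst (hash i) p (s, z) ^ (1 + ρ) - 1) / ρ) :=
      sum_le_sum fun i _ => by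
        have h := log_card_sub_condEntropy_le (hp.mapFst (hash i)) hρ₀
        simp only [sum_mapFst_fst] at h
        exact mul_le_mul_of_nonneg_left h (hμ i)
    _ = ((Fintype.card M : ℝ) ^ ρ * ∑ z, (∑ b, p (b, z)) ^ (-ρ) *
          ∑ i, μ i * ∑ s, mapFst (hash i) p (s, z) ^ (1 + ρ) - 1) / ρ := by
      simp only [mul_div_assoc', ← sum_div, mul_sub, mul_one, sum_sub_distrib, hμ1]
      congr 2
      simp only [mul_sum]
      rw [sum_comm]
      exact sum_congr rfl fun z _ => sum_congr rfl fun i _ => sum_congr rfl fun s _ => by ring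
    _ ≤ ((Fintype.card M : ℝ) ^ ρ * ∑ z, ((∑ b, p (b, z) ^ (1 / (1 - ρ))) ^ (1 - ρ) +
          (Fintype.card M : ℝ) ^ (-ρ) * ∑ b, p (b, z)) - 1) / ρ := by
      gcongr with z
      exact hhash.rpow_neg_mul_sum_mul_sum_rpow_one_add_le (x := fun b => p (b, z))
        (fun b => hp.1 (b, z)) hρ₀ hρ₁
    _ = _ := by
      rw [sum_add_distrib, ← mul_sum, hpZ1, mul_add, ← mul_assoc, ← rpow_add hS]
      simp only [add_neg_cancel, rpow_zero, mul_one, add_sub_cancel_right]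
      ring

theorem TwoUniversal.sum_mul_mutualInfo_le {ι L M E γ : Type} [Fintype ι] [Fintype L]
    [Fintype M] [Fintype E] [Fintype γ] [DecidableEq M] [Nonempty L] [Nonempty M]
    {μ : ι → ℝ} {hash : ι → L → M} (hhash : TwoUniversal μ hash) {w : E → ℝ} (hw : IsPMF w)
    {k : L × E → γ → ℝ} (hk : IsChannel k) {ρ : ℝ} (hρ₀ : 0 < ρ) (hρ₁ : ρ < 1) :
    ∑ i, μ i * mutualInfo (fun sz : M × γ => ∑ b, ∑ e,
        if hash i b = sz.1 then (1 / Fintype.card L : ℝ) * w e * k (b, e) sz.2 else 0)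
      ≤ (Fintype.card M : ℝ) ^ ρ / (ρ * Fintype.card L) *
          ∑ e, w e * ∑ z, (∑ b, k (b, e) z ^ (1 / (1 - ρ))) ^ (1 - ρ) := by
  have hL : (0 : ℝ) < Fintype.card L := by exact_mod_cast Fintype.card_pos
  -- `q e` is the joint pmf of `(B, Z)` given `E = e`, with `B` uniform
  let q : E → L × γ → ℝ := fun e bz => (Fintype.card L : ℝ)⁻¹ * k (bz.1, e) bz.2
  have hq : ∀ e, IsPMF (q e) := fun e => by
    refine ⟨fun bz => mul_nonneg (by positivity) ((hk _).1 _), ?_⟩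
    simp only [q, Fintype.sum_prod_type, ← mul_sum, (hk _).2, mul_one, sum_const, card_univ,
      nsmul_eq_mul, inv_mul_cancel₀ hL.ne']
  have joint : ∀ i, (fun sz : M × γ => ∑ b, ∑ e,
        if hash i b = sz.1 then (1 / Fintype.card L : ℝ) * w e * k (b, e) sz.2 else 0)
      = fun sz => ∑ e, w e * mapFst (hash i) (q e) sz := fun i => by
    ext sz
    simp only [mapFst, q, mul_sum, mul_ite, mul_zero]
    rw [sum_comm]
    exact sum_congr rfl fun e _ => sum_congr rfl fun b _ => by split_ifs <;> ring
  have scale : ∀ e z, (∑ b, q e (b, z) ^ (1 / (1 - ρ))) ^ (1 - ρ)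
      = (Fintype.card L : ℝ)⁻¹ * (∑ b, k (b, e) z ^ (1 / (1 - ρ))) ^ (1 - ρ) := fun e z => by
    simp only [q, mul_rpow (inv_nonneg.2 hL.le) ((hk _).1 _), ← mul_sum]
    rw [mul_rpow (by positivity) (sum_nonneg fun b _ => rpow_nonneg ((hk _).1 _) _),
      ← rpow_mul (inv_nonneg.2 hL.le), one_div_mul_cancel (by linarith), rpow_one]
  calc ∑ i, μ i * mutualInfo (fun sz : M × γ => ∑ b, ∑ e,
        if hash i b = sz.1 then (1 / Fintype.card L : ℝ) * w e * k (b, e) sz.2 else 0)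
    _ ≤ ∑ i, μ i * ∑ e, w e * (log (Fintype.card M) - condEntropy (mapFst (hash i) (q e))) :=
      sum_le_sum fun i _ => by
        rw [joint i]
        exact mul_le_mul_of_nonneg_left (mutualInfo_sum_mul_le hw fun e => (hq e).mapFst _)
          (hhash.1.1 i)
    _ = ∑ e, w e * ∑ i, μ i * (log (Fintype.card M) - condEntropy (mapFst (hash i) (q e))) := by
      simp only [mul_sum]
      rw [sum_comm]
      exact sum_congr rfl fun e _ => sum_congr rfl fun i _ => by ring
    _ ≤ ∑ e, w e * ((Fintype.card M : ℝ) ^ ρ / ρ *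
          ∑ z, (∑ b, q e (b, z) ^ (1 / (1 - ρ))) ^ (1 - ρ)) :=
      sum_le_sum fun e _ => mul_le_mul_of_nonneg_left
        (hhash.sum_mul_log_card_sub_condEntropy_le (hq e) hρ₀ hρ₁) (hw.1 e)
    _ = _ := by
      simp only [scale, mul_sum]
      exact sum_congr rfl fun e _ => sum_congr rfl fun z _ => by field_simp

section RandomCodebook

theorem IsChannel.pi {J V Z : Type} [Fintype J] [DecidableEq J] [Fintype V] [Fintype Z]
    {W : V → Z → ℝ} (hW : IsChannel W) :
    IsChannel (fun (v : J → V) (z : J → Z) => ∏ j, W (v j) (z j)) := fun v =>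
  ⟨fun z => prod_nonneg fun j _ => (hW _).1 _, by
    rw [← Fintype.prod_sum (fun j ζ => W (v j) ζ)]
    simp [(hW _).2]⟩

theorem sum_pi_prod_mul_apply {A X : Type} [Fintype A] [DecidableEq A] [Fintype X]
    {f : A → X → ℝ} (hf : ∀ a, ∑ x, f a x = 1) (a₀ : A) (g : X → ℝ) :
    ∑ c : A → X, (∏ a, f a (c a)) * g (c a₀) = ∑ x, f a₀ x * g x := by
  have factor : ∀ c : A → X, (∏ a, f a (c a)) * g (c a₀)
      = ∏ a, f a (c a) * (if a = a₀ then g (c a) else 1) := fun c => by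
    rw [prod_mul_distrib, Fintype.prod_ite_eq']
  simp only [factor, ← Fintype.prod_sum (fun a x => f a x * (if a = a₀ then g x else 1))]
  rw [Fintype.prod_eq_single a₀ fun a ha => by simp [ha, hf a]]
  simp

/-- Probability of the codebook `cb`: the `cb.1 e ∈ Uⁿ` are i.i.d. `PU`, and `cb.2 (b, e) ∈ Vⁿ`
is drawn from `PVU` letter by letter given `cb.1 e`, independently over `(b, e)`. -/
def codebookProb {U V BT ET : Type} [Fintype BT] [Fintype ET] {n : ℕ} (PU : U → ℝ)
    (PVU : U → V → ℝ) (cb : (ET → Fin n → U) × (BT × ET → Fin n → V)) : ℝ :=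
  (∏ e, ∏ j, PU (cb.1 e j)) * ∏ be : BT × ET, ∏ j, PVU (cb.1 be.2 j) (cb.2 be j)

theorem codebookProb_nonneg {U V BT ET : Type} [Fintype U] [Fintype V] [Fintype BT]
    [Fintype ET] {n : ℕ} {PU : U → ℝ} {PVU : U → V → ℝ} (hPU : IsPMF PU)
    (hPVU : IsChannel PVU) :
    0 ≤ codebookProb (BT := BT) (ET := ET) (n := n) PU PVU := fun _ =>
  mul_nonneg (prod_nonneg fun _ _ => prod_nonneg fun _ _ => hPU.1 _)
    (prod_nonneg fun _ _ => prod_nonneg fun _ _ => (hPVU _).1 _)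

variable {U V Z BT ET : Type} [Fintype U] [Fintype V] [Fintype Z] [Fintype BT] [Fintype ET]
  [DecidableEq BT] [DecidableEq ET] {PU : U → ℝ} {PVU : U → V → ℝ} {W : V → Z → ℝ} {n : ℕ}
  {c : ℝ}

theorem sum_prod_mul_sum_rpow_le (hPVU : IsChannel PVU) (hW : ∀ v z, 0 ≤ W v z)
    (hc₀ : 0 ≤ c) (hc₁ : c ≤ 1) (cu : ET → Fin n → U) (e : ET) :
    ∑ cv : BT × ET → Fin n → V, (∏ be : BT × ET, ∏ j, PVU (cu be.2 j) (cv be j)) *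
        ∑ z : Fin n → Z, (∑ b, ∏ j, W (cv (b, e) j) (z j)) ^ c
      ≤ (Fintype.card BT : ℝ) ^ c * ∏ j, ∑ ζ, (∑ v, PVU (cu e j) v * W v ζ) ^ c := by
  have hπ := hPVU.pi.pi (fun be : BT × ET => cu be.2)
  have hT : ∀ cv : BT × ET → Fin n → V, ∀ z : Fin n → Z, 0 ≤ ∑ b, ∏ j, W (cv (b, e) j) (z j) :=
    fun cv z => sum_nonneg fun b _ => prod_nonneg fun j _ => hW _ _
  have hmean : ∀ z : Fin n → Z, ∑ cv : BT × ET → Fin n → V,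
      (∏ be : BT × ET, ∏ j, PVU (cu be.2 j) (cv be j)) * ∑ b, ∏ j, W (cv (b, e) j) (z j)
        = Fintype.card BT * ∏ j, ∑ v, PVU (cu e j) v * W v (z j) := fun z => by
    simp only [mul_sum]
    rw [sum_comm]
    have hf : ∀ be : BT × ET, ∑ v : Fin n → V, ∏ j, PVU (cu be.2 j) (v j) = 1 :=
      fun be => (hPVU.pi (cu be.2)).2
    simp only [sum_pi_prod_mul_apply hf (_, e) (fun v => ∏ j, W (v j) (z j)),
      ← prod_mul_distrib]
    rw [← Fintype.prod_sum (fun j v => PVU (cu e j) v * W v (z j))]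
    simp
  calc ∑ cv : BT × ET → Fin n → V, (∏ be : BT × ET, ∏ j, PVU (cu be.2 j) (cv be j)) *
        ∑ z : Fin n → Z, (∑ b, ∏ j, W (cv (b, e) j) (z j)) ^ c
    _ = ∑ z : Fin n → Z, ∑ cv : BT × ET → Fin n → V,
          (∏ be : BT × ET, ∏ j, PVU (cu be.2 j) (cv be j)) *
            (∑ b, ∏ j, W (cv (b, e) j) (z j)) ^ c := by
      simp only [mul_sum]
      exact sum_comm
    _ ≤ ∑ z : Fin n → Z, ((Fintype.card BT : ℝ) * ∏ j, ∑ v, PVU (cu e j) v * W v (z j)) ^ c :=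
      sum_le_sum fun z _ => by
        rw [← hmean z]
        exact (concaveOn_rpow hc₀ hc₁).le_map_sum (fun cv _ => (hπ).1 cv) hπ.2
          fun cv _ => hT cv z
    _ = _ := by
      have ha : ∀ j ζ, 0 ≤ ∑ v, PVU (cu e j) v * W v ζ := fun j ζ =>
        sum_nonneg fun v _ => mul_nonneg ((hPVU _).1 _) (hW _ _)
      simp only [mul_rpow (Nat.cast_nonneg _) (prod_nonneg fun j _ => ha j _),
        ← finsetProd_rpow _ _ (fun j _ => ha j _), ← mul_sum]
      rw [Fintype.prod_sum (fun j ζ => (∑ v, PVU (cu e j) v * W v ζ) ^ c)]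

theorem sum_codebookProb_mul_le (hPU : IsPMF PU) (hPVU : IsChannel PVU) (hW : ∀ v z, 0 ≤ W v z)
    (hc₀ : 0 ≤ c) (hc₁ : c ≤ 1) (e : ET) :
    ∑ cb : (ET → Fin n → U) × (BT × ET → Fin n → V), codebookProb PU PVU cb *
        ∑ z : Fin n → Z, (∑ b, ∏ j, W (cb.2 (b, e) j) (z j)) ^ c
      ≤ (Fintype.card BT : ℝ) ^ c * (∑ u, PU u * ∑ ζ, (∑ v, PVU u v * W v ζ) ^ c) ^ n := by
  have hU : ∀ e' : ET, ∑ un : Fin n → U, ∏ j, PU (un j) = 1 := fun _ => by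
    rw [← Fintype.prod_sum (fun _ u => PU u)]
    simp [hPU.2]
  calc ∑ cb : (ET → Fin n → U) × (BT × ET → Fin n → V), codebookProb PU PVU cb *
        ∑ z : Fin n → Z, (∑ b, ∏ j, W (cb.2 (b, e) j) (z j)) ^ c
    _ = ∑ cu : ET → Fin n → U, (∏ e', ∏ j, PU (cu e' j)) *
          ∑ cv : BT × ET → Fin n → V, (∏ be : BT × ET, ∏ j, PVU (cu be.2 j) (cv be j)) *
            ∑ z : Fin n → Z, (∑ b, ∏ j, W (cv (b, e) j) (z j)) ^ c := by
      simp only [codebookProb, Fintype.sum_prod_type, mul_sum, mul_assoc]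
    _ ≤ ∑ cu : ET → Fin n → U, (∏ e', ∏ j, PU (cu e' j)) *
          ((Fintype.card BT : ℝ) ^ c * ∏ j, ∑ ζ, (∑ v, PVU (cu e j) v * W v ζ) ^ c) :=
      sum_le_sum fun cu _ => mul_le_mul_of_nonneg_left
        (sum_prod_mul_sum_rpow_le hPVU hW hc₀ hc₁ cu e)
        (prod_nonneg fun _ _ => prod_nonneg fun _ _ => hPU.1 _)
    _ = (Fintype.card BT : ℝ) ^ c * ∑ un : Fin n → U,
          (∏ j, PU (un j)) * ∏ j, ∑ ζ, (∑ v, PVU (un j) v * W v ζ) ^ c := by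
      simp only [mul_left_comm _ ((Fintype.card BT : ℝ) ^ c), ← mul_sum]
      rw [sum_pi_prod_mul_apply hU e (fun un => ∏ j, ∑ ζ, (∑ v, PVU (un j) v * W v ζ) ^ c)]
    _ = _ := by
      rw [Fintype.sum_pow]
      simp only [prod_mul_distrib]

end RandomCodebook

theorem sum_mul_sum_mul_le_of_le {ι Λ E : Type} [Fintype ι] [Fintype Λ] [Fintype E]
    {μ : ι → ℝ} {ν : Λ → ℝ} {w : E → ℝ} (hν : 0 ≤ ν) (hw : IsPMF w) {F : ι → Λ → ℝ}
    {G : Λ → E → ℝ} {C K : ℝ} (hC : 0 ≤ C) (hF : ∀ l, ∑ i, μ i * F i l ≤ C * ∑ e, w e * G l e)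
    (hG : ∀ e, ∑ l, ν l * G l e ≤ K) :
    ∑ i, μ i * ∑ l, ν l * F i l ≤ C * K := by
  calc ∑ i, μ i * ∑ l, ν l * F i l
    _ = ∑ l, ν l * ∑ i, μ i * F i l := by
      simp only [mul_sum]
      rw [sum_comm]
      exact sum_congr rfl fun _ _ => sum_congr rfl fun _ _ => by ring
    _ ≤ ∑ l, ν l * (C * ∑ e, w e * G l e) :=
      sum_le_sum fun l _ => mul_le_mul_of_nonneg_left (hF l) (hν l)
    _ = C * ∑ e, w e * ∑ l, ν l * G l e := by
      simp only [mul_sum]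
      rw [sum_comm]
      exact sum_congr rfl fun _ _ => sum_congr rfl fun _ _ => by ring
    _ ≤ C * ∑ e, w e * K :=
      mul_le_mul_of_nonneg_left (sum_le_sum fun e _ => mul_le_mul_of_nonneg_left (hG e) (hw.1 e)) hC
    _ = C * K := by rw [← sum_mul, hw.2, one_mul]

theorem stmt_6_general {ι U V Z BT ET ST : Type} [Fintype ι] [Fintype U] [Fintype V] [Fintype Z]
    [Fintype BT] [Fintype ET] [Fintype ST] [DecidableEq BT] [DecidableEq ET]
    [DecidableEq ST] [Nonempty BT] [Nonempty ST]
    (PU : U → ℝ) (hPU : IsPMF PU)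
    (PVU : U → V → ℝ) (hPVU : IsChannel PVU)
    (W : V → Z → ℝ) (hW : IsChannel W)
    (n : ℕ)
    (μ : ι → ℝ) (hash : ι → BT → ST) (hhash : TwoUniversal μ hash)
    (PE : ET → ℝ) (hPE : IsPMF PE)
    (ρ : ℝ) (hρ₀ : 0 < ρ) (hρ₁ : ρ < 1) :
    ∑ i, μ i * ∑ cb : (ET → Fin n → U) × (BT × ET → Fin n → V),
        ((∏ e, ∏ j, PU (cb.1 e j)) *
          ∏ be : BT × ET, ∏ j, PVU (cb.1 be.2 j) (cb.2 be j)) *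
        mutualInfo (fun sz : ST × (Fin n → Z) =>
          ∑ b, ∑ e, if hash i b = sz.1
            then (1 / Fintype.card BT : ℝ) * PE e * ∏ j, W (cb.2 (b, e) j) (sz.2 j)
            else 0)
      ≤ (1 / ρ) * ((Fintype.card ST : ℝ) / Fintype.card BT) ^ ρ *
          (∑ u, PU u * ∑ z, (∑ v, PVU u v * W v z ^ (1 / (1 - ρ))) ^ (1 - ρ)) ^ n := by
  have hB : (0 : ℝ) < Fintype.card BT := by exact_mod_cast Fintype.card_pos
  have codebook_average : ∀ e, ∑ cb : (ET → Fin n → U) × (BT × ET → Fin n → V),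
      codebookProb PU PVU cb *
        ∑ z : Fin n → Z, (∑ b, (∏ j, W (cb.2 (b, e) j) (z j)) ^ (1 / (1 - ρ))) ^ (1 - ρ)
      ≤ (Fintype.card BT : ℝ) ^ (1 - ρ) *
          (∑ u, PU u * ∑ z, (∑ v, PVU u v * W v z ^ (1 / (1 - ρ))) ^ (1 - ρ)) ^ n := fun e => by
    simpa only [finsetProd_rpow _ _ (fun j _ => (hW _).1 _)] using
      sum_codebookProb_mul_le hPU hPVU (W := fun v z => W v z ^ (1 / (1 - ρ)))
        (fun v z => rpow_nonneg ((hW v).1 z) _) (by linarith) (by linarith) e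
  refine (sum_mul_sum_mul_le_of_le (codebookProb_nonneg hPU hPVU) hPE (by positivity)
    (fun cb => hhash.sum_mul_mutualInfo_le hPE (fun be => hW.pi (cb.2 be)) hρ₀ hρ₁)
    codebook_average).trans_eq ?_
  rw [div_rpow (Nat.cast_nonneg _) hB.le, rpow_sub hB, rpow_one]
  field_simp

/-- Eq. (10) of the paper.  Random codebook argument: a codebook
`cb = (cb.1, cb.2)` consists of codewords `cb.1 e ∈ U^n` (drawn i.i.d. `PU`) and
`cb.2 (b, e) ∈ V^n` (drawn according to `∏ i, PVU (cb.1 e i)`, independently over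
`(b, e)`); its probability is the displayed product.  `B` is uniform on `BT`, `E` has pmf
`PE`, the hash choice (pmf `μ` on `ι`) is independent of everything, and `Z^n` is the
memoryless output of `W` for input `cb.2 (B, E)`.  Then for `0 < ρ < 1`,
`I(F(B); Z^n | F, Λ) ≤ (1/ρ) (|ST|/|BT|)^ρ (∑ u, PU u * exp(φ(ρ, W, P_{V|U=u})))^n`. -/
theorem stmt_6 {ι U V Z BT ET ST : Type} [Fintype ι] [Fintype U] [Fintype V] [Fintype Z]
    [Fintype BT] [Fintype ET] [Fintype ST] [DecidableEq BT] [DecidableEq ET]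
    [DecidableEq ST] [Nonempty BT] [Nonempty ST]
    (PU : U → ℝ) (hPU : IsPMF PU)
    (PVU : U → V → ℝ) (hPVU : IsChannel PVU)
    (W : V → Z → ℝ) (hW : IsChannel W)
    (n : ℕ) (hn : 1 ≤ n)
    (μ : ι → ℝ) (hash : ι → BT → ST) (hhash : TwoUniversal μ hash)
    (PE : ET → ℝ) (hPE : IsPMF PE)
    (ρ : ℝ) (hρ₀ : 0 < ρ) (hρ₁ : ρ < 1) :
    ∑ i, μ i * ∑ cb : (ET → Fin n → U) × (BT × ET → Fin n → V),
        ((∏ e, ∏ j, PU (cb.1 e j)) *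
          ∏ be : BT × ET, ∏ j, PVU (cb.1 be.2 j) (cb.2 be j)) *
        mutualInfo (fun sz : ST × (Fin n → Z) =>
          ∑ b, ∑ e, if hash i b = sz.1
            then (1 / Fintype.card BT : ℝ) * PE e * ∏ j, W (cb.2 (b, e) j) (sz.2 j)
            else 0)
      ≤ (1 / ρ) * ((Fintype.card ST : ℝ) / Fintype.card BT) ^ ρ *
          (∑ u, PU u * ∑ z, (∑ v, PVU u v * W v z ^ (1 / (1 - ρ))) ^ (1 - ρ)) ^ n :=
  stmt_6_general PU hPU PVU hPVU W hW n μ hash hhash PE hPE ρ hρ₀ hρ₁
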